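/- For every C∞ diffeomorphism ν of ℝⁿ with ν(0) = 0, every n×n real matrix E, every m ≥ 1 and all indices 1 ≤ p, q₁, …, q_m ≤ n, the function t ↦ ∂_{q_m}⋯∂_{q_1}[x ↦ exp(−tE)·ν(exp(tE)·x)]^p(0) is differentiable at t = 0, with derivative Σ_{s=1}^m Σ_{u=1}^n E^u_{q_s}·∂_{q_m}⋯∂_u⋯∂_{q_1}ν^p(0) (the index q_s replaced by u) − Σ_{r=1}^n E^p_r·∂_{q_m}⋯∂_{q_1}ν^r(0). -/

import Mathlib

/-- A `C^∞` diffeomorphism of `ℝⁿ` (modeled as `Fin n → ℝ`). -/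
structure Diffeo (n : ℕ) where
  toFun : (Fin n → ℝ) → (Fin n → ℝ)
  invFun : (Fin n → ℝ) → (Fin n → ℝ)
  smooth : ContDiff ℝ (⊤ : ℕ∞) toFun
  smooth_inv : ContDiff ℝ (⊤ : ℕ∞) invFun
  left_inv : Function.LeftInverse invFun toFun
  right_inv : Function.RightInverse invFun toFun

/-- Partial derivative in the `j`-th coordinate direction. -/
noncomputable def pd {n : ℕ} (j : Fin n) (f : (Fin n → ℝ) → ℝ) : (Fin n → ℝ) → ℝ :=
  fun x => fderiv ℝ f x (Pi.single j 1)

/-- Iterated partial derivative `∂_{q_m}⋯∂_{q_1}`, with `q 0 = q_1` applied first. -/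
noncomputable def itpd {n : ℕ} :
    ∀ {k : ℕ}, (Fin k → Fin n) → ((Fin n → ℝ) → ℝ) → ((Fin n → ℝ) → ℝ)
  | 0, _, f => f
  | _ + 1, j, f => itpd (fun m => j m.succ) (pd (j 0) f)

/-!
Write `e_j` for the standard basis and `v = (e_{q_m}, …, e_{q_1})`. The Taylor coordinate
`∂_{q_m}⋯∂_{q_1}f(0)` is `D^m f(0) v`, and for `f = A ∘ ν ∘ M` with `A`, `M` linear it equals
`A (D (M v_1, …, M v_m))`, where `D = D^m ν(0)` no longer depends on `A`, `M`. For `A = exp(-tE)`,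
`M = exp(tE)` the product rule at `t = 0` gives `-E (D v) + Σ_s D(v with v_s replaced by E v_s)`,
and expanding `E e_q = Σ_u E^u_q e_u` by multilinearity gives the two sums of the formula.
-/

open Function Matrix

theorem ContDiff.pd {n : ℕ} {k : WithTop ℕ∞} {f : (Fin n → ℝ) → ℝ} (hf : ContDiff ℝ (k + 1) f)
    (j : Fin n) : ContDiff ℝ k (pd j f) :=
  (hf.fderiv_right le_rfl).clm_apply contDiff_const

/-- `itpd` differentiates along `q 0` first, whereas the last argument of `iteratedFDeriv` is the
direction differentiated first: hence the reversal `s.rev`. -/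
theorem itpd_eq_iteratedFDeriv {n : ℕ} : ∀ {k : ℕ} (q : Fin k → Fin n) {f : (Fin n → ℝ) → ℝ},
    ContDiff ℝ k f → ∀ x,
    itpd q f x = iteratedFDeriv ℝ k f x (fun s => Pi.single (q s.rev) 1)
  | 0, q, f, hf, x => by simp [itpd]
  | k + 1, q, f, hf, x => by
    replace hf : ContDiff ℝ (k + 1) f := mod_cast hf
    have hpd : pd (q 0) f = ContinuousLinearMap.apply ℝ ℝ (Pi.single (q 0) 1) ∘ fderiv ℝ f := rfl
    have hinit : Fin.init (fun s => Pi.single (q s.rev) 1 : Fin (k + 1) → Fin n → ℝ) =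
        fun s => Pi.single (q s.rev.succ) 1 := by
      ext1 s
      simp [Fin.init, Fin.rev_castSucc]
    rw [itpd, itpd_eq_iteratedFDeriv _ (hf.pd (q 0)) x, hpd,
      ContinuousLinearMap.iteratedFDeriv_comp_left _ (hf.fderiv_right le_rfl).contDiffAt le_rfl,
      iteratedFDeriv_succ_apply_right]
    simp [hinit]

theorem itpd_apply_eq_iteratedFDeriv {n k : ℕ} (q : Fin k → Fin n)
    {f : (Fin n → ℝ) → Fin n → ℝ} (hf : ContDiff ℝ k f) (r : Fin n) (x : Fin n → ℝ) :
    itpd q (fun y => f y r) x = iteratedFDeriv ℝ k f x (fun s => Pi.single (q s.rev) 1) r := by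
  have hr : (fun y => f y r) = ContinuousLinearMap.proj (R := ℝ) (φ := fun _ => ℝ) r ∘ f := rfl
  rw [hr, itpd_eq_iteratedFDeriv q ((ContinuousLinearMap.proj r).contDiff.comp hf) x,
    ContinuousLinearMap.iteratedFDeriv_comp_left _ hf.contDiffAt le_rfl]
  rfl

theorem update_single_comp_rev {n k : ℕ} (q : Fin k → Fin n) (s : Fin k) (u : Fin n) :
    update (fun s' => (Pi.single (q s'.rev) 1 : Fin n → ℝ)) s (Pi.single u 1) =
      fun s' => Pi.single (update q s.rev u s'.rev) 1 := by
  ext1 s'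
  rcases eq_or_ne s' s with rfl | h
  · simp
  · simp [h]

theorem MultilinearMap.map_update_eq_sum_single {R ι κ M : Type*} [CommSemiring R] [Fintype κ]
    [DecidableEq κ] [DecidableEq ι] [AddCommMonoid M] [Module R M]
    (f : MultilinearMap R (fun _ : ι => κ → R) M) (v : ι → κ → R) (i : ι) (w : κ → R) :
    f (update v i w) = ∑ u, w u • f (update v i (Pi.single u 1)) := by
  conv_lhs => rw [← LinearMap.sum_single_apply _ w]
  rw [f.map_update_sum]
  refine Finset.sum_congr rfl fun u _ => ?_
  rw [← f.map_update_smul, ← Pi.single_smul', smul_eq_mul, mul_one]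

section Calculus

variable {𝕜 : Type*} [NontriviallyNormedField 𝕜]
  {E F G H : Type*} [NormedAddCommGroup E] [NormedSpace 𝕜 E] [NormedAddCommGroup F]
  [NormedSpace 𝕜 F] [NormedAddCommGroup G] [NormedSpace 𝕜 G] [NormedAddCommGroup H]
  [NormedSpace 𝕜 H]

theorem iteratedFDeriv_clm_comp_comp_clm_apply (L : G →L[𝕜] H) {g : F → G}
    {k : ℕ} (hg : ContDiff 𝕜 k g) (A : E →L[𝕜] F) (x : E) (v : Fin k → E) :
    iteratedFDeriv 𝕜 k (fun y => L (g (A y))) x v =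
      L (iteratedFDeriv 𝕜 k g (A x) (fun i => A (v i))) := by
  rw [show (fun y => L (g (A y))) = L ∘ (g ∘ A) from rfl,
    L.iteratedFDeriv_comp_left (hg.comp A.contDiff).contDiffAt le_rfl,
    A.iteratedFDeriv_comp_right hg x le_rfl]
  rfl

theorem ContinuousMultilinearMap.hasDerivAt_comp {ι : Type*} [Fintype ι] [DecidableEq ι]
    (f : ContinuousMultilinearMap 𝕜 (fun _ : ι => F) G) {c : ι → 𝕜 → F} {c' : ι → F} {t : 𝕜}
    (hc : ∀ i, HasDerivAt (c i) (c' i) t) :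
    HasDerivAt (fun t => f (fun i => c i t)) (∑ i, f (update (fun j => c j t) i (c' i))) t := by
  refine ((f.hasFDerivAt _).comp_hasDerivAt t (hasDerivAt_pi.2 hc)).congr_deriv ?_
  simp [linearDeriv_apply]

theorem HasDerivAt.mulVec {ι κ : Type*} [Fintype κ] {A : 𝕜 → Matrix ι κ 𝕜}
    {A' : Matrix ι κ 𝕜} {w : 𝕜 → κ → 𝕜} {w' : κ → 𝕜} {t : 𝕜}
    (hA : ∀ i j, HasDerivAt (fun t => A t i j) (A' i j) t) (hw : HasDerivAt w w' t) :
    HasDerivAt (fun t => A t *ᵥ w t) (A' *ᵥ w t + A t *ᵥ w') t := by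
  refine hasDerivAt_pi.2 fun i => ?_
  have := HasDerivAt.fun_sum (u := Finset.univ) fun j _ => (hA i j).mul (hasDerivAt_pi.1 hw j)
  simpa [Matrix.mulVec, dotProduct, Finset.sum_add_distrib] using this

end Calculus

section MatrixExp

variable {𝕂 ι : Type*} [RCLike 𝕂] [Fintype ι] [DecidableEq ι]

theorem hasDerivAt_exp_smul_apply_zero (E : Matrix ι ι 𝕂) (i j : ι) :
    HasDerivAt (fun t : 𝕂 => NormedSpace.exp (t • E) i j) (E i j) 0 := by
  -- Matrices have no global normed-ring instance; any one will do, entries being continuous linear.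
  let _ : NormedRing (Matrix ι ι 𝕂) := Matrix.linftyOpNormedRing
  let _ : NormedAlgebra 𝕂 (Matrix ι ι 𝕂) := Matrix.linftyOpNormedAlgebra
  have h := @hasDerivAt_exp_smul_const 𝕂 _ _ _ _ (FiniteDimensional.complete 𝕂 _) E 0
  rw [zero_smul, NormedSpace.exp_zero, one_mul] at h
  exact (LinearMap.toContinuousLinearMap (entryLinearMap 𝕂 𝕂 i j)).hasFDerivAt.comp_hasDerivAt 0 h

theorem hasDerivAt_exp_neg_smul_apply_zero (E : Matrix ι ι 𝕂) (i j : ι) :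
    HasDerivAt (fun t : 𝕂 => NormedSpace.exp (-(t • E)) i j) (-E i j) 0 := by
  have h := hasDerivAt_exp_smul_apply_zero (-E) i j
  simp only [smul_neg] at h
  exact h

theorem hasDerivAt_exp_smul_mulVec_zero (E : Matrix ι ι 𝕂) (w : ι → 𝕂) :
    HasDerivAt (fun t : 𝕂 => NormedSpace.exp (t • E) *ᵥ w) (E *ᵥ w) 0 := by
  simpa using (hasDerivAt_const 0 w).mulVec (hasDerivAt_exp_smul_apply_zero E)

end MatrixExp

section TaylorCoordinates

variable {n k : ℕ} {f : (Fin n → ℝ) → Fin n → ℝ}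

theorem itpd_mulVec_comp_mulVec (hf : ContDiff ℝ k f) (q : Fin k → Fin n)
    (A M : Matrix (Fin n) (Fin n) ℝ) (p : Fin n) :
    itpd q (fun x => (A *ᵥ f (M *ᵥ x)) p) 0 =
      (A *ᵥ iteratedFDeriv ℝ k f 0 (fun s => M *ᵥ Pi.single (q s.rev) 1)) p := by
  have hAfM : ContDiff ℝ k (fun x => A *ᵥ f (M *ᵥ x)) :=
    A.mulVecLin.toContinuousLinearMap.contDiff.comp
      (hf.comp M.mulVecLin.toContinuousLinearMap.contDiff)
  have h := iteratedFDeriv_clm_comp_comp_clm_apply A.mulVecLin.toContinuousLinearMap hf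
    M.mulVecLin.toContinuousLinearMap 0 (fun s => Pi.single (q s.rev) 1)
  simp only [LinearMap.coe_toContinuousLinearMap', mulVecLin_apply, mulVec_zero] at h
  rw [itpd_apply_eq_iteratedFDeriv q hAfM p 0, h]

theorem iteratedFDeriv_update_mulVec_apply (hf : ContDiff ℝ k f) (q : Fin k → Fin n)
    (E : Matrix (Fin n) (Fin n) ℝ) (s : Fin k) (p : Fin n) :
    iteratedFDeriv ℝ k f 0 (update (fun s => Pi.single (q s.rev) 1) s
        (E *ᵥ Pi.single (q s.rev) 1)) p =
      ∑ u, E u (q s.rev) * itpd (update q s.rev u) (fun x => f x p) 0 := by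
  rw [← ContinuousMultilinearMap.coe_coe, MultilinearMap.map_update_eq_sum_single,
    Finset.sum_apply]
  refine Finset.sum_congr rfl fun u _ => ?_
  rw [itpd_apply_eq_iteratedFDeriv _ hf, ← update_single_comp_rev, Pi.smul_apply, smul_eq_mul,
    mulVec_single_one]
  rfl

end TaylorCoordinates

theorem itpd_infinitesimal_gl_action_general (n : ℕ) (ν : Diffeo n)
    (E : Matrix (Fin n) (Fin n) ℝ) (m : ℕ)
    (p : Fin n) (q : Fin m → Fin n) :
    HasDerivAt
      (fun t : ℝ =>
        itpd q
          (fun x =>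
            ((NormedSpace.exp (-(t • E))).mulVec
              (ν.toFun ((NormedSpace.exp (t • E)).mulVec x))) p) 0)
      ((∑ s : Fin m, ∑ u : Fin n,
          E u (q s) * itpd (Function.update q s u) (fun x => ν.toFun x p) 0) -
        ∑ r : Fin n, E p r * itpd q (fun x => ν.toFun x r) 0)
      0 := by
  have hν : ContDiff ℝ m ν.toFun := ν.smooth.of_le (mod_cast le_top)
  set v : Fin m → Fin n → ℝ := fun s => Pi.single (q s.rev) 1
  set D := iteratedFDeriv ℝ m ν.toFun 0
  have hW : HasDerivAt (fun t : ℝ => D (fun s => NormedSpace.exp (t • E) *ᵥ v s))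
      (∑ s, D (update v s (E *ᵥ v s))) 0 := by
    simpa only [zero_smul, NormedSpace.exp_zero, one_mulVec] using
      D.hasDerivAt_comp fun s => hasDerivAt_exp_smul_mulVec_zero E (v s)
  have hF := (hasFDerivAt_apply p _).comp_hasDerivAt (0 : ℝ)
    (HasDerivAt.mulVec (hasDerivAt_exp_neg_smul_apply_zero E) hW)
  rw [funext fun t => itpd_mulVec_comp_mulVec hν q _ _ p]
  refine hF.congr_deriv ?_
  simp only [v, D, zero_smul, neg_zero, NormedSpace.exp_zero, one_mulVec,
    ContinuousLinearMap.proj_apply, Pi.add_apply, Finset.sum_apply,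
    iteratedFDeriv_update_mulVec_apply hν]
  rw [← Equiv.sum_comp Fin.revPerm]
  simp [Matrix.mulVec, dotProduct, itpd_apply_eq_iteratedFDeriv _ hν]
  ring

/-- Infinitesimal `glₙ`-action on Taylor coordinates: for `ν ∈ G†` and an `n×n` matrix
`E`, the function `t ↦ ∂_{q_m}⋯∂_{q_1}[x ↦ exp(−tE)·ν(exp(tE)·x)]^p(0)` is
differentiable at `t = 0` with derivative
`Σ_{s,u} E^u_{q_s}·∂_{q_m}⋯∂_u⋯∂_{q_1}ν^p(0) − Σ_r E^p_r·∂_{q_m}⋯∂_{q_1}ν^r(0)`. -/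
theorem itpd_infinitesimal_gl_action (n : ℕ) (ν : Diffeo n) (hν : ν.toFun 0 = 0)
    (E : Matrix (Fin n) (Fin n) ℝ) (m : ℕ) (hm : 1 ≤ m)
    (p : Fin n) (q : Fin m → Fin n) :
    HasDerivAt
      (fun t : ℝ =>
        itpd q
          (fun x =>
            ((NormedSpace.exp (-(t • E))).mulVec
              (ν.toFun ((NormedSpace.exp (t • E)).mulVec x))) p) 0)
      ((∑ s : Fin m, ∑ u : Fin n,
          E u (q s) * itpd (Function.update q s u) (fun x => ν.toFun x p) 0) -
        ∑ r : Fin n, E p r * itpd q (fun x => ν.toFun x r) 0)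
      0 :=
  itpd_infinitesimal_gl_action_general n ν E m p q
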